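/- arXiv:1808.07905 — 6 statements merged into one kernel-verified Lean document; each statement's English description precedes it below -/
import Mathlib

section
/- Consider the energy-efficient data center birth-death chain on states {(0,0),...,(n,0),(n,1),...,(n,m)} with arrival rate λ>0, where the death rate at state (i,0) is iμ_1 and at state (n,j) is ν(d_{n,j}) = nμ_1 + min(d_{n,j}, j)μ_2, for a policy d = (d_{n,1},...,d_{n,m}) with d_{n,j} ∈ {0,1,...,m}. If two policies d^1 ≥ d^2 componentwise (i.e., d^1_{n,j} ≥ d^2_{n,j} for all j), then the stationary probabilities satisfy π^{(d^1)}(i,0) ≥ π^{(d^2)}(i,0) for all i = 0,1,...,n. -/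
/-!
Raising the policy can only raise the death rates `ν(d_{n,j})`, so it shrinks the weights
`ξ_{n,j}` and with them the normalizer `b`, while the weights `ξ_{i,0}` do not depend on the
policy at all.
-/

open Finset

/-- The paper's `ν(d_{n,i})`. -/
def deathRate (n : ℕ) (μ1 μ2 : ℝ) (d : ℕ → ℕ) (i : ℕ) : ℝ :=
  (n : ℝ) * μ1 + (min (d i) i : ℝ) * μ2

section DeathRate

variable {n : ℕ} {μ1 μ2 : ℝ}

theorem deathRate_pos (hn : 1 ≤ n) (hμ1 : 0 < μ1) (hμ2 : 0 ≤ μ2) (d : ℕ → ℕ) (i : ℕ) :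
    0 < deathRate n μ1 μ2 d i := by
  have hn' : (0 : ℝ) < n := by exact_mod_cast hn
  unfold deathRate
  positivity

theorem deathRate_mono (hμ2 : 0 ≤ μ2) {d1 d2 : ℕ → ℕ} (hdom : ∀ j, d2 j ≤ d1 j) (i : ℕ) :
    deathRate n μ1 μ2 d2 i ≤ deathRate n μ1 μ2 d1 i := by
  unfold deathRate
  gcongr
  exact hdom i

theorem prod_deathRate_le (hn : 1 ≤ n) (hμ1 : 0 < μ1) (hμ2 : 0 ≤ μ2) {d1 d2 : ℕ → ℕ}
    (hdom : ∀ j, d2 j ≤ d1 j) (s : Finset ℕ) :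
    ∏ i ∈ s, deathRate n μ1 μ2 d2 i ≤ ∏ i ∈ s, deathRate n μ1 μ2 d1 i :=
  prod_le_prod (fun i _ => (deathRate_pos hn hμ1 hμ2 d2 i).le)
    fun i _ => deathRate_mono hμ2 hdom i

end DeathRate

theorem stmt1_general (n m : ℕ) (hn : 1 ≤ n)
    (lam μ1 μ2 : ℝ) (hlam : 0 < lam) (hμ1 : 0 < μ1) (hμ2 : 0 < μ2)
    (d1 d2 : ℕ → ℕ)
    (hdom : ∀ j, d2 j ≤ d1 j)
    (xi0 : ℕ → ℝ) (hxi0 : ∀ i, xi0 i = lam ^ i / ((i.factorial : ℝ) * μ1 ^ i))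
    (xin : (ℕ → ℕ) → ℕ → ℝ)
    (hxin : ∀ d j, xin d j = lam ^ n / ((n.factorial : ℝ) * μ1 ^ n) *
        (lam ^ j / ∏ i ∈ Finset.Icc 1 j, ((n : ℝ) * μ1 + (min (d i) i : ℝ) * μ2)))
    (b : (ℕ → ℕ) → ℝ)
    (hb : ∀ d, b d = ∑ i ∈ Finset.range (n + 1), xi0 i + ∑ j ∈ Finset.Icc 1 m, xin d j)
    (π : (ℕ → ℕ) → ℕ → ℝ)
    (hπ : ∀ d i, π d i = xi0 i / b d) :
    ∀ i ≤ n, π d2 i ≤ π d1 i := by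
  have hprod_pos : ∀ d j, 0 < ∏ i ∈ Icc 1 j, deathRate n μ1 μ2 d i := fun d j =>
    prod_pos fun i _ => deathRate_pos hn hμ1 hμ2.le d i
  have hxi0_pos : ∀ i, 0 < xi0 i := fun i => by rw [hxi0]; positivity
  have hxin_eq : ∀ d j, xin d j = lam ^ n / ((n.factorial : ℝ) * μ1 ^ n) *
      (lam ^ j / ∏ i ∈ Icc 1 j, deathRate n μ1 μ2 d i) := hxin
  have hxin_pos : ∀ d j, 0 < xin d j := fun d j => by
    rw [hxin_eq]; have := hprod_pos d j; positivity
  have hxin_anti : ∀ j, xin d1 j ≤ xin d2 j := fun j => by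
    rw [hxin_eq, hxin_eq]
    gcongr _ * (_ / ?_)
    · exact hprod_pos d2 j
    · exact prod_deathRate_le hn hμ1 hμ2.le hdom (Icc 1 j)
  have hb_pos : 0 < b d1 := by
    rw [hb]
    exact add_pos_of_pos_of_nonneg (sum_pos (fun i _ => hxi0_pos i) nonempty_range_add_one)
      (sum_nonneg fun j _ => (hxin_pos d1 j).le)
  have hb_anti : b d1 ≤ b d2 := by
    rw [hb, hb]
    gcongr with j
    exact hxin_anti j
  intro i _
  rw [hπ, hπ]
  exact div_le_div_of_nonneg_left (hxi0_pos i).le hb_pos hb_anti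

/-- if policies `d1 ≥ d2` componentwise, then the stationary
probabilities of the data-center chain satisfy `π^{(d1)}(i,0) ≥ π^{(d2)}(i,0)`
for all `i = 0,...,n`, where `π^{(d)}(i,0) = ξ_{i,0}/b^{(d)}`. -/
theorem stmt1 (n m : ℕ) (hn : 1 ≤ n) (hm : 1 ≤ m)
    (lam μ1 μ2 : ℝ) (hlam : 0 < lam) (hμ1 : 0 < μ1) (hμ2 : 0 < μ2)
    (d1 d2 : ℕ → ℕ) (hd1 : ∀ j, d1 j ≤ m) (hd2 : ∀ j, d2 j ≤ m)
    (hdom : ∀ j, d2 j ≤ d1 j)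
    (xi0 : ℕ → ℝ) (hxi0 : ∀ i, xi0 i = lam ^ i / ((i.factorial : ℝ) * μ1 ^ i))
    (xin : (ℕ → ℕ) → ℕ → ℝ)
    (hxin : ∀ d j, xin d j = lam ^ n / ((n.factorial : ℝ) * μ1 ^ n) *
        (lam ^ j / ∏ i ∈ Finset.Icc 1 j, ((n : ℝ) * μ1 + (min (d i) i : ℝ) * μ2)))
    (b : (ℕ → ℕ) → ℝ)
    (hb : ∀ d, b d = ∑ i ∈ Finset.range (n + 1), xi0 i + ∑ j ∈ Finset.Icc 1 m, xin d j)
    (π : (ℕ → ℕ) → ℕ → ℝ)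
    (hπ : ∀ d i, π d i = xi0 i / b d) :
    ∀ i ≤ n, π d2 i ≤ π d1 i :=
  stmt1_general n m hn lam μ1 μ2 hlam hμ1 hμ2 d1 d2 hdom xi0 hxi0 xin hxin b hb π hπ
end

section
/- Let B be the generator of an irreducible continuous-time Markov chain on a finite state space with stationary distribution π, let f and f' be two reward vectors and B' another irreducible generator with stationary distribution π'. Define η = π f, η' = π' f', and let g solve the Poisson equation B g = η e − f, where e is the all-ones vector. Then the performance difference satisfies η' − η = π' [ (B' − B) g + (f' − f) ]. -/
open Finset

/-- performance difference formula: if `π'` is stationary for the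
generator `B'`, `η = π f`, `η' = π' f'`, and `g` solves the Poisson equation
`B g = η e − f`, then `η' − η = π' [ (B' − B) g + (f' − f) ]`. -/
theorem stmt3 {S : Type*} [Fintype S] [DecidableEq S]
    (B B' : Matrix S S ℝ) (π π' f f' g : S → ℝ)
    (hBrow : ∀ i, ∑ j, B i j = 0) (hB'row : ∀ i, ∑ j, B' i j = 0)
    (hBoff : ∀ i j, i ≠ j → 0 ≤ B i j) (hB'off : ∀ i j, i ≠ j → 0 ≤ B' i j)
    (hπ : ∀ j, ∑ i, π i * B i j = 0) (hπ1 : ∑ i, π i = 1) (hπnn : ∀ i, 0 ≤ π i)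
    (hπ' : ∀ j, ∑ i, π' i * B' i j = 0) (hπ'1 : ∑ i, π' i = 1) (hπ'nn : ∀ i, 0 ≤ π' i)
    (η η' : ℝ) (hη : η = ∑ i, π i * f i) (hη' : η' = ∑ i, π' i * f' i)
    (hg : ∀ i, ∑ j, B i j * g j = η - f i) :
    η' - η = ∑ i, π' i * ((∑ j, (B' i j - B i j) * g j) + (f' i - f i)) := by
  have key : ∀ i, π' i * ((∑ j, (B' i j - B i j) * g j) + (f' i - f i))
      = (∑ j, π' i * (B' i j * g j)) - π' i * (η - f i) + π' i * (f' i - f i) := by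
    intro i
    rw [← hg i, Finset.mul_sum, mul_add, Finset.mul_sum]
    simp_rw [sub_mul, mul_sub]
    rw [Finset.sum_sub_distrib]
  simp_rw [key]
  have h1 : ∑ i, ∑ j, π' i * (B' i j * g j) = 0 := by
    rw [Finset.sum_comm]
    simp_rw [← mul_assoc, ← Finset.sum_mul, hπ']
    simp
  rw [Finset.sum_add_distrib, Finset.sum_sub_distrib, h1]
  simp_rw [mul_sub, Finset.sum_sub_distrib, ← Finset.sum_mul, hπ'1, ← hη']
  ring
end

section
/- Let Q be the generator of an irreducible finite continuous-time birth-death chain on {0,...,N}, f a reward vector, π the stationary distribution, η = πf. For any constant ℑ, the Poisson equation −Q g = f − η e has a unique solution g with g(0) = ℑ, and it is given by restricting to coordinates 1..N: φ = (−B)^{-1} h + μ_1 (−B)^{-1} e_1 · ℑ, where B is Q with first row and column removed, h is the vector (f(k) − η) for k = 1,...,N, μ_1 is the death rate from state 1, and e_1 is the first standard basis vector. -/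
open Finset Matrix

/-- Generator of a finite birth-death process on `{0,...,N}`. -/
noncomputable def bdGen (N : ℕ) (lam mu : ℕ → ℝ) (k l : ℕ) : ℝ :=
  if l = k + 1 then lam k
  else if l + 1 = k then mu k
  else if l = k then -((if k < N then lam k else 0) + (if 0 < k then mu k else 0))
  else 0

lemma sum_two' {n : ℕ} (F : Fin n → ℝ) (a b : Fin n) (hab : a ≠ b)
    (h0 : ∀ k, k ≠ a → k ≠ b → F k = 0) : ∑ k, F k = F a + F b := by
  rw [← Finset.sum_subset (Finset.subset_univ {a, b})]
  · rw [Finset.sum_insert (by simp [hab]), Finset.sum_singleton]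
  · intro x _ hx
    simp only [Finset.mem_insert, Finset.mem_singleton] at hx
    push_neg at hx
    exact h0 x hx.1 hx.2

lemma sum_three' {n : ℕ} (F : Fin n → ℝ) (a b c : Fin n) (hab : a ≠ b) (hac : a ≠ c)
    (hbc : b ≠ c) (h0 : ∀ k, k ≠ a → k ≠ b → k ≠ c → F k = 0) :
    ∑ k, F k = F a + F b + F c := by
  rw [← Finset.sum_subset (Finset.subset_univ {a, b, c})]
  · rw [Finset.sum_insert (by simp [hab, hac]), Finset.sum_insert (by simp [hbc]),
      Finset.sum_singleton, add_assoc]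
  · intro x _ hx
    simp only [Finset.mem_insert, Finset.mem_singleton] at hx
    push_neg at hx
    exact h0 x hx.1 hx.2.1 hx.2.2

lemma bdGen_up (N : ℕ) (lam mu : ℕ → ℝ) (k : ℕ) : bdGen N lam mu k (k + 1) = lam k := by
  unfold bdGen; rw [if_pos rfl]

lemma bdGen_down (N : ℕ) (lam mu : ℕ → ℝ) (k : ℕ) (h : 1 ≤ k) :
    bdGen N lam mu k (k - 1) = mu k := by
  unfold bdGen; rw [if_neg (by omega), if_pos (by omega)]

lemma bdGen_diag_mid (N : ℕ) (lam mu : ℕ → ℝ) (k : ℕ) (h1 : 1 ≤ k) (h2 : k < N) :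
    bdGen N lam mu k k = -(lam k + mu k) := by
  unfold bdGen
  rw [if_neg (by omega), if_neg (by omega), if_pos rfl, if_pos h2, if_pos (by omega)]

lemma bdGen_diag_zero (N : ℕ) (lam mu : ℕ → ℝ) (h : 0 < N) :
    bdGen N lam mu 0 0 = -(lam 0 + 0) := by
  unfold bdGen
  rw [if_neg (by omega), if_neg (by omega), if_pos rfl, if_pos h, if_neg (by omega)]

lemma bdGen_diag_hi (N : ℕ) (lam mu : ℕ → ℝ) (k : ℕ) (h1 : 1 ≤ k) (h2 : ¬k < N) :
    bdGen N lam mu k k = -(0 + mu k) := by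
  unfold bdGen
  rw [if_neg (by omega), if_neg (by omega), if_pos rfl, if_neg h2, if_pos (by omega)]

lemma bdGen_zero' (N : ℕ) (lam mu : ℕ → ℝ) (k l : ℕ) (h1 : l ≠ k + 1) (h2 : l + 1 ≠ k)
    (h3 : l ≠ k) : bdGen N lam mu k l = 0 := by
  unfold bdGen; rw [if_neg h1, if_neg h2, if_neg h3]

/-- for an irreducible finite birth-death chain with stationary
distribution `π`, reward `f`, `η = πf`, and any constant `c`, the Poisson
equation `−Q g = f − η e` has a unique solution `g` with `g 0 = c`, given on
coordinates `1..N` by `φ = (−B)⁻¹ h + μ₁ (−B)⁻¹ e₁ · c`. -/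
theorem stmt5 (N : ℕ) (hN : 1 ≤ N) (lam mu : ℕ → ℝ)
    (hlam : ∀ k < N, 0 < lam k) (hmu : ∀ k, 1 ≤ k → k ≤ N → 0 < mu k)
    (Q : Matrix (Fin (N + 1)) (Fin (N + 1)) ℝ)
    (hQ : ∀ k l, Q k l = bdGen N lam mu k.val l.val)
    (B : Matrix (Fin N) (Fin N) ℝ)
    (hB : ∀ i j, B i j = Q i.succ j.succ)
    (π : Fin (N + 1) → ℝ)
    (hπ : ∀ l, ∑ k, π k * Q k l = 0) (hπ1 : ∑ k, π k = 1) (hπnn : ∀ k, 0 ≤ π k)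
    (f : Fin (N + 1) → ℝ) (η : ℝ) (hη : η = ∑ k, π k * f k) (c : ℝ) :
    (∃! g : Fin (N + 1) → ℝ,
      g 0 = c ∧ ∀ i, -(∑ j, Q i j * g j) = f i - η) ∧
    (∀ g : Fin (N + 1) → ℝ,
      (g 0 = c ∧ ∀ i, -(∑ j, Q i j * g j) = f i - η) →
      ∀ k : Fin N, g k.succ =
        (∑ l : Fin N, (-B)⁻¹ k l * (f l.succ - η)) + mu 1 * (-B)⁻¹ k ⟨0, hN⟩ * c) := by
  -- Step 1: -B is invertible
  have hker : ∀ v : Fin N → ℝ, (-B) *ᵥ v = 0 → v = 0 := by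
    intro v hv
    set W : ℕ → ℝ := fun t => if h : t < N + 1 then (Fin.cases 0 v ⟨t, h⟩ : ℝ) else 0 with hWdef
    have hWeq : ∀ t (h : t < N + 1), W t = Fin.cases 0 v ⟨t, h⟩ := fun t h => dif_pos h
    have hW0 : W 0 = 0 := by
      rw [hWeq 0 (by omega)]
      exact Fin.cases_zero
    have hWs : ∀ t (ht : t < N), W (t + 1) = v ⟨t, ht⟩ := by
      intro t ht
      rw [hWeq (t + 1) (by omega)]
      exact Fin.cases_succ (⟨t, ht⟩ : Fin N)
    have hBv : B *ᵥ v = 0 := by rwa [Matrix.neg_mulVec, neg_eq_zero] at hv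
    have hrow : ∀ i : Fin N, ∑ j, Q i.succ j * (Fin.cases 0 v j : ℝ) = 0 := by
      intro i
      rw [Fin.sum_univ_succ]
      simp only [Fin.cases_zero, Fin.cases_succ, mul_zero, zero_add]
      have : ∑ j : Fin N, Q i.succ j.succ * v j = (B *ᵥ v) i := by
        simp only [Matrix.mulVec, dotProduct]
        exact Finset.sum_congr rfl fun j _ => by rw [hB]
      rw [this, hBv]
      rfl
    have claimA : ∀ t, t < N →
        mu (t + 1) * (W t - W (t + 1)) =
          (if t + 1 < N then lam (t + 1) else 0) * (W (t + 1) - W (t + 2)) := by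
      intro t ht
      have hr := hrow ⟨t, ht⟩
      by_cases hlt : t + 1 < N
      · rw [sum_three' _ ⟨t, by omega⟩ ⟨t + 1, by omega⟩ ⟨t + 2, by omega⟩
          (by simp only [ne_eq, Fin.mk.injEq]; omega)
          (by simp only [ne_eq, Fin.mk.injEq]; omega)
          (by simp only [ne_eq, Fin.mk.injEq]; omega)
          (by
            intro k hka hkb hkc
            have h1 : k.val ≠ t := fun h => hka (Fin.ext h)
            have h2 : k.val ≠ t + 1 := fun h => hkb (Fin.ext h)
            have h3 : k.val ≠ t + 2 := fun h => hkc (Fin.ext h)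
            have hz : Q (Fin.succ ⟨t, ht⟩) k = 0 := by
              rw [hQ]
              exact bdGen_zero' N lam mu (t + 1) k.val (by omega) (by omega) (by omega)
            rw [hz, zero_mul])] at hr
        have e1 : Q (Fin.succ ⟨t, ht⟩) ⟨t, by omega⟩ = mu (t + 1) := by
          rw [hQ]; exact bdGen_down N lam mu (t + 1) (by omega)
        have e2 : Q (Fin.succ ⟨t, ht⟩) ⟨t + 1, by omega⟩ = -(lam (t + 1) + mu (t + 1)) := by
          rw [hQ]; exact bdGen_diag_mid N lam mu (t + 1) (by omega) hlt
        have e3 : Q (Fin.succ ⟨t, ht⟩) ⟨t + 2, by omega⟩ = lam (t + 1) := by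
          rw [hQ]; exact bdGen_up N lam mu (t + 1)
        rw [e1, e2, e3, ← hWeq t (by omega), ← hWeq (t + 1) (by omega),
          ← hWeq (t + 2) (by omega)] at hr
        rw [if_pos hlt]
        linear_combination hr
      · rw [sum_two' _ ⟨t, by omega⟩ ⟨t + 1, by omega⟩
          (by simp only [ne_eq, Fin.mk.injEq]; omega)
          (by
            intro k hka hkb
            have h1 : k.val ≠ t := fun h => hka (Fin.ext h)
            have h2 : k.val ≠ t + 1 := fun h => hkb (Fin.ext h)
            have hz : Q (Fin.succ ⟨t, ht⟩) k = 0 := by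
              rw [hQ]
              exact bdGen_zero' N lam mu (t + 1) k.val (by omega) (by omega) (by omega)
            rw [hz, zero_mul])] at hr
        have e1 : Q (Fin.succ ⟨t, ht⟩) ⟨t, by omega⟩ = mu (t + 1) := by
          rw [hQ]; exact bdGen_down N lam mu (t + 1) (by omega)
        have e2 : Q (Fin.succ ⟨t, ht⟩) ⟨t + 1, by omega⟩ = -(0 + mu (t + 1)) := by
          rw [hQ]; exact bdGen_diag_hi N lam mu (t + 1) (by omega) hlt
        rw [e1, e2, ← hWeq t (by omega), ← hWeq (t + 1) (by omega)] at hr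
        rw [if_neg hlt]
        linear_combination hr
    have claimD : ∀ j t, t + 1 + j = N → W t - W (t + 1) = 0 := by
      intro j
      induction j with
      | zero =>
        intro t hsum
        have hA := claimA t (by omega)
        rw [if_neg (by omega), zero_mul] at hA
        have hmus : 0 < mu (t + 1) := hmu (t + 1) (by omega) (by omega)
        rcases mul_eq_zero.mp hA with h | h
        · exact absurd h hmus.ne'
        · exact h
      | succ j ih =>
        intro t hsum
        have hA := claimA t (by omega)
        rw [if_pos (by omega)] at hA
        have hnext : W (t + 1) - W (t + 2) = 0 := ih (t + 1) (by omega)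
        rw [hnext, mul_zero] at hA
        have hmus : 0 < mu (t + 1) := hmu (t + 1) (by omega) (by omega)
        rcases mul_eq_zero.mp hA with h | h
        · exact absurd h hmus.ne'
        · exact h
    have hWall : ∀ t, t ≤ N → W t = 0 := by
      intro t
      induction t with
      | zero => intro _; exact hW0
      | succ t ih =>
        intro ht
        have hD := claimD (N - (t + 1)) t (by omega)
        have := ih (by omega)
        linarith
    funext j
    have h1 : W (j.val + 1) = v j := hWs j.val j.isLt
    have h2 : W (j.val + 1) = 0 := hWall (j.val + 1) (by omega)
    rw [← h1, h2]
    rfl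
  have hunit : IsUnit (-B) := by
    rw [← Matrix.mulVec_injective_iff_isUnit]
    intro x y hxy
    have h0 : (-B) *ᵥ (x - y) = 0 := by
      rw [Matrix.mulVec_sub, hxy, sub_self]
    exact sub_eq_zero.mp (hker _ h0)
  have hdetu : IsUnit (-B).det := (Matrix.isUnit_iff_isUnit_det _).mp hunit
  have hMl : (-B)⁻¹ * (-B) = 1 := Matrix.nonsing_inv_mul _ hdetu
  have hMr : (-B) * (-B)⁻¹ = 1 := Matrix.mul_nonsing_inv _ hdetu
  -- Step 2: π 0 ≠ 0
  have DB : ∀ l (hl : l < N),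
      π ⟨l, by omega⟩ * lam l = π ⟨l + 1, by omega⟩ * mu (l + 1) := by
    intro l
    induction l with
    | zero =>
      intro hl
      have hr := hπ ⟨0, by omega⟩
      rw [sum_two' _ ⟨0, by omega⟩ ⟨1, by omega⟩
        (by simp only [ne_eq, Fin.mk.injEq]; omega)
        (by
          intro k hka hkb
          have h1 : k.val ≠ 0 := fun h => hka (Fin.ext h)
          have h2 : k.val ≠ 1 := fun h => hkb (Fin.ext h)
          rw [hQ, bdGen_zero' N lam mu k.val 0 (by omega) (by omega) (by omega), mul_zero])] at hr
      have e1 : Q ⟨0, by omega⟩ ⟨0, by omega⟩ = -(lam 0 + 0) := by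
        rw [hQ]; exact bdGen_diag_zero N lam mu (by omega)
      have e2 : Q ⟨1, by omega⟩ ⟨0, by omega⟩ = mu 1 := by
        rw [hQ]; exact bdGen_down N lam mu 1 le_rfl
      rw [e1, e2] at hr
      linear_combination -hr
    | succ l ih =>
      intro hl
      have hIH := ih (by omega)
      have hr := hπ ⟨l + 1, by omega⟩
      rw [sum_three' _ ⟨l, by omega⟩ ⟨l + 1, by omega⟩ ⟨l + 2, by omega⟩
        (by simp only [ne_eq, Fin.mk.injEq]; omega)
        (by simp only [ne_eq, Fin.mk.injEq]; omega)
        (by simp only [ne_eq, Fin.mk.injEq]; omega)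
        (by
          intro k hka hkb hkc
          have h1 : k.val ≠ l := fun h => hka (Fin.ext h)
          have h2 : k.val ≠ l + 1 := fun h => hkb (Fin.ext h)
          have h3 : k.val ≠ l + 2 := fun h => hkc (Fin.ext h)
          rw [hQ, bdGen_zero' N lam mu k.val (l + 1) (by omega) (by omega) (by omega),
            mul_zero])] at hr
      have e1 : Q ⟨l, by omega⟩ ⟨l + 1, by omega⟩ = lam l := by
        rw [hQ]; exact bdGen_up N lam mu l
      have e2 : Q ⟨l + 1, by omega⟩ ⟨l + 1, by omega⟩ = -(lam (l + 1) + mu (l + 1)) := by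
        rw [hQ]; exact bdGen_diag_mid N lam mu (l + 1) (by omega) hl
      have e3 : Q ⟨l + 2, by omega⟩ ⟨l + 1, by omega⟩ = mu (l + 2) := by
        rw [hQ]; exact bdGen_down N lam mu (l + 2) (by omega)
      rw [e1, e2, e3] at hr
      linear_combination -hr + hIH
  have hπ0ne : π 0 ≠ 0 := by
    intro h0
    have hall : ∀ t (h : t < N + 1), π ⟨t, h⟩ = 0 := by
      intro t
      induction t with
      | zero => intro h; exact h0
      | succ t ih =>
        intro h
        have ht : t < N := by omega
        have hD := DB t ht
        rw [ih (by omega), zero_mul] at hD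
        have hmut : 0 < mu (t + 1) := hmu (t + 1) (by omega) (by omega)
        rcases mul_eq_zero.mp hD.symm with h' | h'
        · exact h'
        · exact absurd h' hmut.ne'
    have hz : ∑ k, π k = 0 := Finset.sum_eq_zero fun k _ => hall k.val k.isLt
    rw [hπ1] at hz
    norm_num at hz
  -- Step 3: equation 0 follows from equations 1..N
  have eq0 : ∀ g : Fin (N + 1) → ℝ,
      (∀ i : Fin N, -(∑ j, Q i.succ j * g j) = f i.succ - η) →
      -(∑ j, Q 0 j * g j) = f 0 - η := by
    intro g hgs
    have hswap : ∑ k, π k * (∑ j, Q k j * g j) = 0 := by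
      calc ∑ k, π k * ∑ j, Q k j * g j = ∑ k, ∑ j, π k * Q k j * g j := by
            refine Finset.sum_congr rfl fun k _ => ?_
            rw [Finset.mul_sum]
            exact Finset.sum_congr rfl fun j _ => by ring
        _ = ∑ j, ∑ k, π k * Q k j * g j := Finset.sum_comm
        _ = ∑ j, (∑ k, π k * Q k j) * g j := by
            refine Finset.sum_congr rfl fun j _ => ?_
            rw [Finset.sum_mul]
        _ = 0 := by simp [hπ]
    have hsum2 : ∑ k, π k * (f k - η) = 0 := by
      have h' : ∀ k ∈ Finset.univ, π k * (f k - η) = π k * f k - π k * η :=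
        fun k _ => by ring
      rw [Finset.sum_congr rfl h', Finset.sum_sub_distrib, ← Finset.sum_mul,
        hπ1, one_mul, ← hη, sub_self]
    have hfull : ∑ k, π k * (-(∑ j, Q k j * g j) - (f k - η)) = 0 := by
      have h' : ∀ k ∈ Finset.univ, π k * (-(∑ j, Q k j * g j) - (f k - η)) =
          -(π k * (∑ j, Q k j * g j)) - π k * (f k - η) := fun k _ => by ring
      rw [Finset.sum_congr rfl h', Finset.sum_sub_distrib, Finset.sum_neg_distrib,
        hswap, hsum2]
      ring
    rw [Fin.sum_univ_succ] at hfull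
    have hz : ∑ i : Fin N, π i.succ * (-(∑ j, Q i.succ j * g j) - (f i.succ - η)) = 0 :=
      Finset.sum_eq_zero fun i _ => by rw [hgs i]; ring
    rw [hz, add_zero] at hfull
    rcases mul_eq_zero.mp hfull with h | h
    · exact absurd h hπ0ne
    · linarith [h]
  -- Step 4: matrix translation
  set hvec : Fin N → ℝ := fun k => (f k.succ - η) + (if k.val = 0 then mu 1 * c else 0)
    with hvecdef
  have htrans : ∀ g : Fin (N + 1) → ℝ, g 0 = c → ∀ i : Fin N,
      (-(∑ j, Q i.succ j * g j) = f i.succ - η ↔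
        ((-B) *ᵥ (fun j => g j.succ)) i = hvec i) := by
    intro g hg0 i
    have hQ0 : Q i.succ 0 = if i.val = 0 then mu 1 else 0 := by
      by_cases h : i.val = 0
      · rw [if_pos h, hQ]
        have hv : (Fin.succ i).val = 1 := by rw [Fin.val_succ, h]
        rw [hv]
        exact bdGen_down N lam mu 1 le_rfl
      · rw [if_neg h, hQ]
        exact bdGen_zero' N lam mu (i.val + 1) 0 (by omega) (by omega) (by omega)
    have hsplit : ∑ j, Q i.succ j * g j =
        (if i.val = 0 then mu 1 else 0) * c + ∑ j : Fin N, B i j * g j.succ := by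
      rw [Fin.sum_univ_succ, hg0, hQ0]
      congr 1
      exact Finset.sum_congr rfl fun j _ => by rw [hB]
    have hmv : ((-B) *ᵥ (fun j => g j.succ)) i = -∑ j : Fin N, B i j * g j.succ := by
      simp only [Matrix.mulVec, dotProduct, Matrix.neg_apply, neg_mul]
      rw [Finset.sum_neg_distrib]
    rw [hsplit, hmv, hvecdef]
    simp only
    constructor <;> intro h <;> split_ifs at h ⊢ <;> linarith
  -- formula for any solution
  have hformula : ∀ g : Fin (N + 1) → ℝ,
      (g 0 = c ∧ ∀ i, -(∑ j, Q i j * g j) = f i - η) →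
      (fun j => g j.succ) = (-B)⁻¹ *ᵥ hvec := by
    rintro g ⟨hg0, hgeq⟩
    have hBv : (-B) *ᵥ (fun j => g j.succ) = hvec :=
      funext fun i => (htrans g hg0 i).mp (hgeq i.succ)
    calc (fun j => g j.succ) = ((-B)⁻¹ * (-B)) *ᵥ (fun j => g j.succ) := by
          rw [hMl, Matrix.one_mulVec]
      _ = (-B)⁻¹ *ᵥ ((-B) *ᵥ (fun j => g j.succ)) := by rw [Matrix.mulVec_mulVec]
      _ = (-B)⁻¹ *ᵥ hvec := by rw [hBv]
  -- existence
  set g₀ : Fin (N + 1) → ℝ := Fin.cases c ((-B)⁻¹ *ᵥ hvec) with hg₀def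
  have hg00 : g₀ 0 = c := by rw [hg₀def]; exact Fin.cases_zero
  have hg0succ : ∀ j : Fin N, g₀ j.succ = ((-B)⁻¹ *ᵥ hvec) j := by
    intro j; rw [hg₀def]; exact Fin.cases_succ j
  have hsucceq : ∀ i : Fin N, -(∑ j, Q i.succ j * g₀ j) = f i.succ - η := by
    intro i
    rw [htrans g₀ hg00 i]
    have heq1 : (fun j => g₀ j.succ) = (-B)⁻¹ *ᵥ hvec := funext hg0succ
    rw [heq1, Matrix.mulVec_mulVec, hMr, Matrix.one_mulVec]
  have hgeq : ∀ i, -(∑ j, Q i j * g₀ j) = f i - η := by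
    intro i
    induction i using Fin.cases with
    | zero => exact eq0 g₀ hsucceq
    | succ j => exact hsucceq j
  constructor
  · refine ⟨g₀, ⟨hg00, hgeq⟩, ?_⟩
    intro g hg
    funext i
    induction i using Fin.cases with
    | zero => rw [hg.1, hg00]
    | succ j =>
      have h1 := congrFun (hformula g hg) j
      have h2 := congrFun (hformula g₀ ⟨hg00, hgeq⟩) j
      rw [h1, h2]
  · intro g hg k
    have h1 := congrFun (hformula g hg) k
    rw [h1]
    show ∑ l, (-B)⁻¹ k l * hvec l = _
    rw [hvecdef]
    simp only
    have hsp : ∀ l : Fin N, (-B)⁻¹ k l * ((f l.succ - η) + (if l.val = 0 then mu 1 * c else 0))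
        = (-B)⁻¹ k l * (f l.succ - η) + (if l = ⟨0, hN⟩ then (-B)⁻¹ k l * (mu 1 * c) else 0) := by
      intro l
      rw [mul_add]
      congr 1
      rw [mul_ite, mul_zero]
      exact if_congr (by simp [Fin.ext_iff]) rfl rfl
    rw [Finset.sum_congr rfl fun l _ => hsp l, Finset.sum_add_distrib,
      Finset.sum_ite_eq' Finset.univ (⟨0, hN⟩ : Fin N), if_pos (Finset.mem_univ _)]
    ring
end

section
/- In the data center model, fix j ∈ {1,...,m} and consider two policies d and d' that agree in all components except d'_{n,j} = j and d_{n,j} > j. Then the generators and stationary distributions coincide, the reward vectors differ only in the (n,j) entry by f^{(d)}(n,j) − f^{(d')}(n,j) = −(d_{n,j} − j)(P_{2,W} − P_{2,S})C_1, and therefore the long-run average profit satisfies η^{d} = η^{d'} − π^{(d)}(n,j)(d_{n,j} − j)(P_{2,W} − P_{2,S})C_1. In particular, since P_{2,W} > P_{2,S} and C_1 > 0, η^{d} is strictly decreasing in d_{n,j} on {j, j+1, ..., m}. -/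
open Finset

/-- Death rate of the data-center birth-death chain at state index `k`
(states `0..n` are `(k,0)`; states `n+1..n+m` are `(n, k-n)`). -/
noncomputable def dcDeath (n : ℕ) (μ1 μ2 : ℝ) (d : ℕ → ℕ) (k : ℕ) : ℝ :=
  if k ≤ n then (k : ℝ) * μ1
  else (n : ℝ) * μ1 + (min (d (k - n)) (k - n) : ℝ) * μ2

/-- Policy-dependent generator of the data-center birth-death chain. -/
noncomputable def dcGen (n m : ℕ) (lam μ1 μ2 : ℝ) (d : ℕ → ℕ) (k l : ℕ) : ℝ :=
  if l = k + 1 then lam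
  else if l + 1 = k then dcDeath n μ1 μ2 d k
  else if l = k then -((if k < n + m then lam else 0) + dcDeath n μ1 μ2 d k)
  else 0

/-- `π` is a stationary probability vector for the policy-`d` chain. -/
def dcStationary (n m : ℕ) (lam μ1 μ2 : ℝ) (d : ℕ → ℕ) (π : ℕ → ℝ) : Prop :=
  (∀ l ∈ Finset.range (n + m + 1),
    ∑ k ∈ Finset.range (n + m + 1), π k * dcGen n m lam μ1 μ2 d k l = 0) ∧
  (∑ k ∈ Finset.range (n + m + 1), π k = 1) ∧
  (∀ k ∈ Finset.range (n + m + 1), 0 ≤ π k)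

/-- Reward (profit rate) function of the data center at state index `k`. -/
noncomputable def dcReward (n m : ℕ) (lam μ1 μ2 R P1W P2W P2S C1 C21 C22 C3 C4 : ℝ)
    (d : ℕ → ℕ) (k : ℕ) : ℝ :=
  if k ≤ n then
    R * ((k : ℝ) * μ1) - ((n : ℝ) * P1W + (m : ℝ) * P2S) * C1 - (k : ℝ) * C21
  else
    R * ((n : ℝ) * μ1 + (min (k - n) (d (k - n)) : ℝ) * μ2)
      - ((n : ℝ) * P1W + (d (k - n) : ℝ) * P2W + ((m : ℝ) - (d (k - n) : ℝ)) * P2S) * C1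
      - ((n : ℝ) * C21 + ((k - n : ℕ) : ℝ) * C22)
      - (n : ℝ) * μ1 * C3
      - (if k - n = m then lam * C4 else 0)

/-- `g` solves the Poisson equation `B^{(d)} g = η e - f` for the policy-`d` chain. -/
def dcPoisson (n m : ℕ) (lam μ1 μ2 : ℝ) (d : ℕ → ℕ) (f : ℕ → ℝ) (η : ℝ)
    (g : ℕ → ℝ) : Prop :=
  ∀ k ∈ Finset.range (n + m + 1),
    ∑ l ∈ Finset.range (n + m + 1), dcGen n m lam μ1 μ2 d k l * g l = η - f k


/-!
Since `d'_{n,j} = j < d_{n,j}`, both policies serve `min(d_{n,j}, j) = j` jobs at state `(n,j)`,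
so the death rates, hence the generators, coincide. The chain is a birth-death chain with
positive rates, so every stationary vector satisfies detailed balance `λ π_k = ν_{k+1} π_{k+1}`;
it is therefore the normalized product form, unique and strictly positive, and `π = π'`. The
rewards differ only at `(n,j)`, by the power drawn by the `d_{n,j} - j` extra servers kept in
working rather than sleep mode, so `η - η'` is that difference weighted by `π (n,j) > 0`.
-/

section Balance

variable {a : ℝ} {b x y : ℕ → ℝ} {N : ℕ}

theorem eq_mul_prod_of_balance (hb : ∀ k < N, b (k + 1) ≠ 0)
    (hx : ∀ k < N, a * x k = b (k + 1) * x (k + 1)) :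
    ∀ k ≤ N, x k = x 0 * ∏ i ∈ range k, a / b (i + 1)
  | 0, _ => by simp
  | k + 1, hk => by
    rw [prod_range_succ, ← mul_assoc, ← eq_mul_prod_of_balance hb hx k (by omega),
      eq_comm, mul_div_assoc', div_eq_iff (hb k hk), mul_comm (x k), hx k hk, mul_comm]

theorem sum_eq_mul_sum_prod_of_balance (hb : ∀ k < N, b (k + 1) ≠ 0)
    (hx : ∀ k < N, a * x k = b (k + 1) * x (k + 1)) :
    ∑ k ∈ range (N + 1), x k = x 0 * ∑ k ∈ range (N + 1), ∏ i ∈ range k, a / b (i + 1) := by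
  rw [mul_sum]
  exact sum_congr rfl fun k hk ↦
    eq_mul_prod_of_balance hb hx k (Nat.lt_succ_iff.mp (mem_range.mp hk))

theorem eq_of_balance_of_sum_eq_one (hb : ∀ k < N, b (k + 1) ≠ 0)
    (hx : ∀ k < N, a * x k = b (k + 1) * x (k + 1))
    (hy : ∀ k < N, a * y k = b (k + 1) * y (k + 1))
    (hx1 : ∑ k ∈ range (N + 1), x k = 1) (hy1 : ∑ k ∈ range (N + 1), y k = 1) :
    ∀ k ≤ N, x k = y k := by
  rw [sum_eq_mul_sum_prod_of_balance hb hx] at hx1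
  rw [sum_eq_mul_sum_prod_of_balance hb hy] at hy1
  have hx0 : x 0 = y 0 := mul_right_cancel₀ (right_ne_zero_of_mul_eq_one hx1) (hx1.trans hy1.symm)
  intro k hk
  rw [eq_mul_prod_of_balance hb hx k hk, eq_mul_prod_of_balance hb hy k hk, hx0]

theorem pos_of_balance (ha : 0 < a) (hb : ∀ k < N, 0 < b (k + 1))
    (hx : ∀ k < N, a * x k = b (k + 1) * x (k + 1))
    (hx0 : 0 ≤ x 0) (hx1 : ∑ k ∈ range (N + 1), x k = 1) :
    ∀ k ≤ N, 0 < x k := by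
  have hb' : ∀ k < N, b (k + 1) ≠ 0 := fun k hk ↦ (hb k hk).ne'
  rw [sum_eq_mul_sum_prod_of_balance hb' hx] at hx1
  have hx0 : 0 < x 0 := hx0.lt_of_ne (left_ne_zero_of_mul_eq_one hx1).symm
  intro k hk
  rw [eq_mul_prod_of_balance hb' hx k hk]
  exact mul_pos hx0 (prod_pos fun i hi ↦ div_pos ha (hb i (by simp at hi; omega)))

end Balance

theorem sum_mul_sub_sum_mul_of_eq_off {ι R : Type*} [CommRing R] {s : Finset ι} {i : ι}
    (hi : i ∈ s) {p f g : ι → R} (h : ∀ k ∈ s, k ≠ i → f k = g k) :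
    ∑ k ∈ s, p k * f k - ∑ k ∈ s, p k * g k = p i * (f i - g i) := by
  rw [← sum_sub_distrib]
  simp only [← mul_sub]
  exact sum_eq_single_of_mem i hi fun k hk hne ↦ by rw [h k hk hne, sub_self, mul_zero]

section DataCenter

variable {n m : ℕ} {lam μ1 μ2 : ℝ} {d d' : ℕ → ℕ} {π : ℕ → ℝ}

theorem dcDeath_pos (hn : 1 ≤ n) (hμ1 : 0 < μ1) (hμ2 : 0 ≤ μ2) {k : ℕ} (hk : 1 ≤ k) :
    0 < dcDeath n μ1 μ2 d k := by
  unfold dcDeath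
  split_ifs with hkn
  · exact mul_pos (by exact_mod_cast hk) hμ1
  · have hmin : (0 : ℝ) ≤ min (d (k - n) : ℝ) ((k : ℝ) - n) :=
      le_min (Nat.cast_nonneg _) (by rw [sub_nonneg]; exact_mod_cast (not_le.mp hkn).le)
    have : (0 : ℝ) < n * μ1 := mul_pos (by exact_mod_cast hn) hμ1
    positivity

theorem dcDeath_eq_of_min_eq (h : ∀ i, min (d i) i = min (d' i) i) :
    dcDeath n μ1 μ2 d = dcDeath n μ1 μ2 d' := by
  funext k
  unfold dcDeath
  split_ifs with hkn
  · rfl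
  · have hcast : ((k : ℝ) - n) = ((k - n : ℕ) : ℝ) := by
      rw [Nat.cast_sub (not_le.mp hkn).le]
    rw [hcast, ← Nat.cast_min, ← Nat.cast_min, h]

theorem dcGen_eq_of_min_eq (h : ∀ i, min (d i) i = min (d' i) i) :
    dcGen n m lam μ1 μ2 d = dcGen n m lam μ1 μ2 d' := by
  funext k l
  simp only [dcGen, dcDeath_eq_of_min_eq h]

theorem sum_mul_dcGen_zero (hN : 0 < n + m) :
    ∑ k ∈ range (n + m + 1), π k * dcGen n m lam μ1 μ2 d k 0
      = -(lam * π 0 - dcDeath n μ1 μ2 d 1 * π 1) := by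
  have hterm : ∀ k, π k * dcGen n m lam μ1 μ2 d k 0
      = (if k = 0 then -lam * π 0 else 0) + (if k = 1 then dcDeath n μ1 μ2 d 1 * π 1 else 0) := by
    intro k
    unfold dcGen
    split_ifs <;> subst_vars <;> first | contradiction | omega | simp [dcDeath, mul_comm]
  simp only [hterm, sum_add_distrib, sum_ite_eq', mem_range, if_pos (show 0 < n + m + 1 by omega),
    if_pos (show 1 < n + m + 1 by omega)]
  ring

theorem sum_mul_dcGen_succ {l : ℕ} (hl : l + 1 < n + m) :
    ∑ k ∈ range (n + m + 1), π k * dcGen n m lam μ1 μ2 d k (l + 1)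
      = (lam * π l - dcDeath n μ1 μ2 d (l + 1) * π (l + 1))
        - (lam * π (l + 1) - dcDeath n μ1 μ2 d (l + 2) * π (l + 2)) := by
  have hterm : ∀ k, π k * dcGen n m lam μ1 μ2 d k (l + 1)
      = (if k = l then lam * π l else 0)
        + (if k = l + 1 then -(lam + dcDeath n μ1 μ2 d (l + 1)) * π (l + 1) else 0)
        + (if k = l + 2 then dcDeath n μ1 μ2 d (l + 2) * π (l + 2) else 0) := by
    intro k
    unfold dcGen
    split_ifs <;> subst_vars <;> first | contradiction | omega | simp [mul_comm]
  simp only [hterm, sum_add_distrib, sum_ite_eq', mem_range, if_pos (show l < n + m + 1 by omega),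
    if_pos (show l + 1 < n + m + 1 by omega), if_pos (show l + 2 < n + m + 1 by omega)]
  ring

theorem dcStationary.balance (hπ : dcStationary n m lam μ1 μ2 d π) :
    ∀ k < n + m, lam * π k = dcDeath n μ1 μ2 d (k + 1) * π (k + 1)
  | 0, hk => by
    have h0 := hπ.1 0 (by simp)
    rw [sum_mul_dcGen_zero hk] at h0
    linarith
  | k + 1, hk => by
    have hk' := hπ.1 (k + 1) (by simp; omega)
    rw [sum_mul_dcGen_succ hk, dcStationary.balance hπ k (by omega)] at hk'
    linarith

theorem dcStationary.unique (hn : 1 ≤ n) (hμ1 : 0 < μ1) (hμ2 : 0 ≤ μ2) {π' : ℕ → ℝ}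
    (hπ : dcStationary n m lam μ1 μ2 d π) (hπ' : dcStationary n m lam μ1 μ2 d π') :
    ∀ k ≤ n + m, π k = π' k :=
  eq_of_balance_of_sum_eq_one (fun k _ ↦ (dcDeath_pos hn hμ1 hμ2 (by omega)).ne')
    hπ.balance hπ'.balance hπ.2.1 hπ'.2.1

theorem dcStationary.pos (hn : 1 ≤ n) (hlam : 0 < lam) (hμ1 : 0 < μ1) (hμ2 : 0 ≤ μ2)
    (hπ : dcStationary n m lam μ1 μ2 d π) : ∀ k ≤ n + m, 0 < π k :=
  pos_of_balance hlam (fun k _ ↦ dcDeath_pos hn hμ1 hμ2 (by omega)) hπ.balance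
    (hπ.2.2 0 (by simp)) hπ.2.1

end DataCenter

section Reward

variable {n m : ℕ} {lam μ1 μ2 R P1W P2W P2S C1 C21 C22 C3 C4 : ℝ} {d d' : ℕ → ℕ}

theorem dcReward_eq_of_apply_eq {k : ℕ} (h : d (k - n) = d' (k - n)) :
    dcReward n m lam μ1 μ2 R P1W P2W P2S C1 C21 C22 C3 C4 d k
      = dcReward n m lam μ1 μ2 R P1W P2W P2S C1 C21 C22 C3 C4 d' k := by
  simp only [dcReward, h]

theorem dcReward_sub_dcReward_of_le {j : ℕ} (hj : 0 < j) (hd : j ≤ d j) (hd' : j ≤ d' j) :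
    dcReward n m lam μ1 μ2 R P1W P2W P2S C1 C21 C22 C3 C4 d (n + j)
      - dcReward n m lam μ1 μ2 R P1W P2W P2S C1 C21 C22 C3 C4 d' (n + j)
      = -(((d j : ℝ) - d' j) * (P2W - P2S) * C1) := by
  have hj' : (((n + j : ℕ) : ℝ) - n) = j := by push_cast; ring
  simp only [dcReward, if_neg (show ¬ n + j ≤ n by omega), Nat.add_sub_cancel_left, hj',
    min_eq_left (show (j : ℝ) ≤ d j by exact_mod_cast hd),
    min_eq_left (show (j : ℝ) ≤ d' j by exact_mod_cast hd')]
  ring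

end Reward

theorem stmt6_general (n m : ℕ) (hn : 1 ≤ n)
    (lam μ1 μ2 R P1W P2W P2S C1 C21 C22 C3 C4 : ℝ)
    (hlam : 0 < lam) (hμ1 : 0 < μ1) (hμ2 : 0 < μ2)
    (hP : P2S < P2W) (hC1 : 0 < C1)
    (j0 : ℕ) (hj1 : 1 ≤ j0) (hj2 : j0 ≤ m)
    (d d' : ℕ → ℕ)
    (hagree : ∀ j, j ≠ j0 → d j = d' j)
    (hd'j : d' j0 = j0) (hdj : j0 < d j0)
    (π π' : ℕ → ℝ)
    (hπ : dcStationary n m lam μ1 μ2 d π)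
    (hπ' : dcStationary n m lam μ1 μ2 d' π')
    (η η' : ℝ)
    (hη : η = ∑ k ∈ Finset.range (n + m + 1),
      π k * dcReward n m lam μ1 μ2 R P1W P2W P2S C1 C21 C22 C3 C4 d k)
    (hη' : η' = ∑ k ∈ Finset.range (n + m + 1),
      π' k * dcReward n m lam μ1 μ2 R P1W P2W P2S C1 C21 C22 C3 C4 d' k) :
    (∀ k l, dcGen n m lam μ1 μ2 d k l = dcGen n m lam μ1 μ2 d' k l) ∧
    (dcReward n m lam μ1 μ2 R P1W P2W P2S C1 C21 C22 C3 C4 d (n + j0)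
        - dcReward n m lam μ1 μ2 R P1W P2W P2S C1 C21 C22 C3 C4 d' (n + j0)
      = -(((d j0 : ℝ) - (j0 : ℝ)) * (P2W - P2S) * C1)) ∧
    (∀ k ∈ Finset.range (n + m + 1), k ≠ n + j0 →
      dcReward n m lam μ1 μ2 R P1W P2W P2S C1 C21 C22 C3 C4 d k
        = dcReward n m lam μ1 μ2 R P1W P2W P2S C1 C21 C22 C3 C4 d' k) ∧
    η = η' - π (n + j0) * ((d j0 : ℝ) - (j0 : ℝ)) * (P2W - P2S) * C1 ∧
    η < η' := by
  have hmin : ∀ i, min (d i) i = min (d' i) i := by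
    intro i
    rcases eq_or_ne i j0 with rfl | hi
    · rw [hd'j, min_eq_right hdj.le, min_self]
    · rw [hagree i hi]
  have hgen : dcGen n m lam μ1 μ2 d = dcGen n m lam μ1 μ2 d' := dcGen_eq_of_min_eq hmin
  have hππ' := hπ.unique hn hμ1 hμ2.le (by rwa [dcStationary, hgen])
  have hrew_ne : ∀ k ∈ range (n + m + 1), k ≠ n + j0 →
      dcReward n m lam μ1 μ2 R P1W P2W P2S C1 C21 C22 C3 C4 d k
        = dcReward n m lam μ1 μ2 R P1W P2W P2S C1 C21 C22 C3 C4 d' k :=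
    fun k _ hk ↦ dcReward_eq_of_apply_eq (hagree _ (by omega))
  have hrew : dcReward n m lam μ1 μ2 R P1W P2W P2S C1 C21 C22 C3 C4 d (n + j0)
      - dcReward n m lam μ1 μ2 R P1W P2W P2S C1 C21 C22 C3 C4 d' (n + j0)
      = -(((d j0 : ℝ) - (j0 : ℝ)) * (P2W - P2S) * C1) := by
    rw [dcReward_sub_dcReward_of_le hj1 hdj.le hd'j.ge, hd'j]
  have hη'π : η' = ∑ k ∈ range (n + m + 1),
      π k * dcReward n m lam μ1 μ2 R P1W P2W P2S C1 C21 C22 C3 C4 d' k :=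
    hη'.trans (sum_congr rfl fun k hk ↦ by rw [hππ' k (by simp at hk; omega)])
  have hη_eq : η = η' - π (n + j0) * ((d j0 : ℝ) - (j0 : ℝ)) * (P2W - P2S) * C1 := by
    have hdiff := sum_mul_sub_sum_mul_of_eq_off (p := π) (mem_range.mpr (by omega)) hrew_ne
    rw [← hη, ← hη'π, hrew] at hdiff
    linarith
  refine ⟨fun k l ↦ congrFun₂ hgen k l, hrew, hrew_ne, hη_eq, ?_⟩
  have hπpos := hπ.pos hn hlam hμ1 hμ2.le (n + j0) (by omega)
  have hdj' : (0 : ℝ) < (d j0 : ℝ) - j0 := sub_pos.mpr (by exact_mod_cast hdj)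
  linarith [mul_pos (mul_pos (mul_pos hπpos hdj') (sub_pos.mpr hP)) hC1]

/-- if `d` and `d'` agree except `d'_{n,j} = j < d_{n,j}`, the
generators and stationary distributions coincide, the rewards differ only at
state `(n,j)` by `−(d_{n,j}−j)(P_{2,W}−P_{2,S})C₁`, hence
`η^d = η^{d'} − π^{(d)}(n,j)(d_{n,j}−j)(P_{2,W}−P_{2,S})C₁ < η^{d'}`. -/
theorem stmt6 (n m : ℕ) (hn : 1 ≤ n) (hm : 1 ≤ m)
    (lam μ1 μ2 R P1W P2W P2S C1 C21 C22 C3 C4 : ℝ)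
    (hlam : 0 < lam) (hμ1 : 0 < μ1) (hμ2 : 0 < μ2)
    (hP2S : 0 < P2S) (hP : P2S < P2W) (hC1 : 0 < C1)
    (hR : 0 ≤ R) (hC21 : 0 ≤ C21) (hC22 : 0 ≤ C22) (hC3 : 0 ≤ C3) (hC4 : 0 ≤ C4)
    (j0 : ℕ) (hj1 : 1 ≤ j0) (hj2 : j0 ≤ m)
    (d d' : ℕ → ℕ) (hd : ∀ j, d j ≤ m) (hd' : ∀ j, d' j ≤ m)
    (hagree : ∀ j, j ≠ j0 → d j = d' j)
    (hd'j : d' j0 = j0) (hdj : j0 < d j0)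
    (π π' : ℕ → ℝ)
    (hπ : dcStationary n m lam μ1 μ2 d π)
    (hπ' : dcStationary n m lam μ1 μ2 d' π')
    (η η' : ℝ)
    (hη : η = ∑ k ∈ Finset.range (n + m + 1),
      π k * dcReward n m lam μ1 μ2 R P1W P2W P2S C1 C21 C22 C3 C4 d k)
    (hη' : η' = ∑ k ∈ Finset.range (n + m + 1),
      π' k * dcReward n m lam μ1 μ2 R P1W P2W P2S C1 C21 C22 C3 C4 d' k) :
    (∀ k l, dcGen n m lam μ1 μ2 d k l = dcGen n m lam μ1 μ2 d' k l) ∧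
    (dcReward n m lam μ1 μ2 R P1W P2W P2S C1 C21 C22 C3 C4 d (n + j0)
        - dcReward n m lam μ1 μ2 R P1W P2W P2S C1 C21 C22 C3 C4 d' (n + j0)
      = -(((d j0 : ℝ) - (j0 : ℝ)) * (P2W - P2S) * C1)) ∧
    (∀ k ∈ Finset.range (n + m + 1), k ≠ n + j0 →
      dcReward n m lam μ1 μ2 R P1W P2W P2S C1 C21 C22 C3 C4 d k
        = dcReward n m lam μ1 μ2 R P1W P2W P2S C1 C21 C22 C3 C4 d' k) ∧
    η = η' - π (n + j0) * ((d j0 : ℝ) - (j0 : ℝ)) * (P2W - P2S) * C1 ∧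
    η < η' :=
  stmt6_general n m hn lam μ1 μ2 R P1W P2W P2S C1 C21 C22 C3 C4 hlam hμ1 hμ2 hP hC1 j0 hj1 hj2 d d'
    hagree hd'j hdj π π' hπ hπ' η η' hη hη'
end

section
/- In the data center model, fix j ∈ {1,...,m} and consider two policies d and d' that agree in all components except d_{n,j} and d'_{n,j}, with d_{n,j}, d'_{n,j} ∈ {0,1,...,j} and d'_{n,j} > d_{n,j}. Then the performance difference equation η^{d'} − η^{d} = μ_2 π^{(d')}(n,j) (d'_{n,j} − d_{n,j}) [G^{(d)}(n,j) + c] holds, where G^{(d)}(n,j) = g^{(d)}(n,j−1) − g^{(d)}(n,j) is the perturbation realization factor, g^{(d)} solves the Poisson equation for policy d, and c = R − (P_{2,W} − P_{2,S})C_1/μ_2. -/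
open Finset

/-
The policies differ only at the state `(n, j0)`, i.e. index `n + j0`. There the death rate grows
by `δ = (d'_{n,j0} - d_{n,j0}) μ₂`, so the generator row changes by `δ (e_{n+j0-1} - e_{n+j0})`,
and the reward grows by `δ c`. Pairing the Poisson equation of `d` with the stationary vector of
`d'` gives the performance difference formula `η' - η = π' ((B' - B) g + f' - f)`, which collapses
to that single row.
-/

section PerformanceDifference

variable {ι : Type*} {s : Finset ι} {B B' : ι → ι → ℝ} {f f' g π' : ι → ℝ} {η : ℝ}

theorem performance_difference
    (hstat : ∀ l ∈ s, ∑ k ∈ s, π' k * B' k l = 0) (hsum : ∑ k ∈ s, π' k = 1)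
    (hpoisson : ∀ k ∈ s, ∑ l ∈ s, B k l * g l = η - f k) :
    ∑ k ∈ s, π' k * f' k - η =
      ∑ k ∈ s, π' k * (∑ l ∈ s, (B' k l - B k l) * g l + (f' k - f k)) := by
  have hB' : ∑ k ∈ s, π' k * ∑ l ∈ s, B' k l * g l = 0 := by
    simp_rw [mul_sum, ← mul_assoc]
    rw [sum_comm]
    exact sum_eq_zero fun l hl => by rw [← sum_mul, hstat l hl, zero_mul]
  have hB : ∑ k ∈ s, π' k * ∑ l ∈ s, B k l * g l = η - ∑ k ∈ s, π' k * f k := by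
    rw [sum_congr rfl fun k hk => by rw [hpoisson k hk]]
    simp only [mul_sub, sum_sub_distrib, ← sum_mul, hsum, one_mul]
  simp only [mul_add, sub_mul, sum_sub_distrib, mul_sub, sum_add_distrib]
  linarith

theorem performance_difference_of_eq_of_ne {k₀ : ι} (hk₀ : k₀ ∈ s)
    (hB : ∀ k ≠ k₀, B' k = B k) (hf : ∀ k ≠ k₀, f' k = f k)
    (hstat : ∀ l ∈ s, ∑ k ∈ s, π' k * B' k l = 0) (hsum : ∑ k ∈ s, π' k = 1)
    (hpoisson : ∀ k ∈ s, ∑ l ∈ s, B k l * g l = η - f k) :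
    ∑ k ∈ s, π' k * f' k - η =
      π' k₀ * (∑ l ∈ s, (B' k₀ l - B k₀ l) * g l + (f' k₀ - f k₀)) := by
  rw [performance_difference hstat hsum hpoisson]
  refine sum_eq_single_of_mem k₀ hk₀ fun k _ hk => ?_
  simp [hB k hk, hf k hk]

end PerformanceDifference

section DataCenter

variable {n m : ℕ} {lam μ1 μ2 R P1W P2W P2S C1 C21 C22 C3 C4 : ℝ} {j₀ : ℕ} {d d' : ℕ → ℕ}

theorem dcDeath_eq_of_ne (hagree : ∀ j, j ≠ j₀ → d j = d' j) {k : ℕ} (hk : k ≠ n + j₀) :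
    dcDeath n μ1 μ2 d' k = dcDeath n μ1 μ2 d k := by
  by_cases h : k ≤ n
  · simp only [dcDeath, if_pos h]
  · simp only [dcDeath, if_neg h, hagree (k - n) (by omega)]

theorem dcGen_eq_of_ne (hagree : ∀ j, j ≠ j₀ → d j = d' j) {k : ℕ} (hk : k ≠ n + j₀) :
    dcGen n m lam μ1 μ2 d' k = dcGen n m lam μ1 μ2 d k := by
  ext l
  simp only [dcGen, dcDeath_eq_of_ne hagree hk]

theorem dcReward_eq_of_ne (hagree : ∀ j, j ≠ j₀ → d j = d' j) {k : ℕ} (hk : k ≠ n + j₀) :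
    dcReward n m lam μ1 μ2 R P1W P2W P2S C1 C21 C22 C3 C4 d' k =
      dcReward n m lam μ1 μ2 R P1W P2W P2S C1 C21 C22 C3 C4 d k := by
  by_cases h : k ≤ n
  · simp only [dcReward, if_pos h]
  · simp only [dcReward, if_neg h, hagree (k - n) (by omega)]

theorem dcGen_sub_dcGen {k : ℕ} (hk : 0 < k) (l : ℕ) :
    dcGen n m lam μ1 μ2 d' k l - dcGen n m lam μ1 μ2 d k l =
      (dcDeath n μ1 μ2 d' k - dcDeath n μ1 μ2 d k) *
        ((if l = k - 1 then 1 else 0) - if l = k then 1 else 0) := by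
  unfold dcGen
  split_ifs <;> first | omega | ring

theorem dcDeath_add {j : ℕ} (hj : 0 < j) (hdj : d j ≤ j) :
    dcDeath n μ1 μ2 d (n + j) = n * μ1 + d j * μ2 := by
  simp [dcDeath, hj.ne', hdj]

theorem sum_dcGen_sub_dcGen_mul (g : ℕ → ℝ) {j : ℕ} (hj : 0 < j) (hjm : j ≤ m)
    (hdj : d j ≤ j) (hd'j : d' j ≤ j) :
    ∑ l ∈ range (n + m + 1),
        (dcGen n m lam μ1 μ2 d' (n + j) l - dcGen n m lam μ1 μ2 d (n + j) l) * g l =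
      μ2 * (d' j - d j) * (g (n + j - 1) - g (n + j)) := by
  simp only [dcGen_sub_dcGen (by omega : 0 < n + j), dcDeath_add hj hdj, dcDeath_add hj hd'j,
    mul_assoc, ← mul_sum, sub_mul, ite_mul, one_mul, zero_mul, sum_sub_distrib, sum_ite_eq',
    mem_range]
  rw [if_pos (by omega), if_pos (by omega)]
  ring

theorem dcReward_sub_dcReward {j : ℕ} (hj : 0 < j) (hdj : d j ≤ j) (hd'j : d' j ≤ j) :
    dcReward n m lam μ1 μ2 R P1W P2W P2S C1 C21 C22 C3 C4 d' (n + j) -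
        dcReward n m lam μ1 μ2 R P1W P2W P2S C1 C21 C22 C3 C4 d (n + j) =
      (d' j - d j) * (R * μ2 - (P2W - P2S) * C1) := by
  simp only [dcReward, add_le_iff_nonpos_right, nonpos_iff_eq_zero, hj.ne', ↓reduceIte,
    Nat.cast_add, add_sub_cancel_left, add_tsub_cancel_left, Nat.cast_le, hd'j, inf_of_le_right,
    hdj, sub_sub_sub_cancel_right]
  ring

end DataCenter

theorem stmt7_general (n m : ℕ)
    (lam μ1 μ2 R P1W P2W P2S C1 C21 C22 C3 C4 : ℝ)
    (hμ2 : 0 < μ2)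
    (j0 : ℕ) (hj1 : 1 ≤ j0) (hj2 : j0 ≤ m)
    (d d' : ℕ → ℕ)
    (hagree : ∀ j, j ≠ j0 → d j = d' j)
    (hdle : d j0 ≤ j0) (hd'le : d' j0 ≤ j0)
    (π' : ℕ → ℝ)
    (hπ' : dcStationary n m lam μ1 μ2 d' π')
    (η η' : ℝ)
    (hη' : η' = ∑ k ∈ Finset.range (n + m + 1),
      π' k * dcReward n m lam μ1 μ2 R P1W P2W P2S C1 C21 C22 C3 C4 d' k)
    (g : ℕ → ℝ)
    (hg : dcPoisson n m lam μ1 μ2 d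
      (dcReward n m lam μ1 μ2 R P1W P2W P2S C1 C21 C22 C3 C4 d) η g)
    (c : ℝ) (hc : c = R - (P2W - P2S) * C1 / μ2) :
    η' - η = μ2 * π' (n + j0) * ((d' j0 : ℝ) - (d j0 : ℝ))
      * ((g (n + j0 - 1) - g (n + j0)) + c) := by
  have hk₀ : n + j0 ∈ range (n + m + 1) := mem_range.2 (by omega)
  rw [hη', performance_difference_of_eq_of_ne hk₀ (fun k hk => dcGen_eq_of_ne hagree hk)
      (fun k hk => dcReward_eq_of_ne hagree hk) hπ'.1 hπ'.2.1 hg,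
    sum_dcGen_sub_dcGen_mul g hj1 hj2 hdle hd'le, dcReward_sub_dcReward hj1 hdle hd'le, hc]
  field_simp

/-- performance difference equation: if `d` and `d'` agree except
at component `j0` with `d_{n,j0} < d'_{n,j0} ≤ j0`, then
`η^{d'} − η^{d} = μ₂ π^{(d')}(n,j0)(d'_{n,j0} − d_{n,j0})[G^{(d)}(n,j0) + c]`,
where `G^{(d)}(n,j0) = g^{(d)}(n,j0−1) − g^{(d)}(n,j0)` and
`c = R − (P_{2,W}−P_{2,S})C₁/μ₂`. -/
theorem stmt7 (n m : ℕ) (hn : 1 ≤ n) (hm : 1 ≤ m)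
    (lam μ1 μ2 R P1W P2W P2S C1 C21 C22 C3 C4 : ℝ)
    (hlam : 0 < lam) (hμ1 : 0 < μ1) (hμ2 : 0 < μ2)
    (hP2S : 0 < P2S) (hP : P2S < P2W) (hC1 : 0 < C1)
    (j0 : ℕ) (hj1 : 1 ≤ j0) (hj2 : j0 ≤ m)
    (d d' : ℕ → ℕ) (hd : ∀ j, d j ≤ m) (hd' : ∀ j, d' j ≤ m)
    (hagree : ∀ j, j ≠ j0 → d j = d' j)
    (hdle : d j0 ≤ j0) (hd'le : d' j0 ≤ j0) (hlt : d j0 < d' j0)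
    (π π' : ℕ → ℝ)
    (hπ : dcStationary n m lam μ1 μ2 d π)
    (hπ' : dcStationary n m lam μ1 μ2 d' π')
    (η η' : ℝ)
    (hη : η = ∑ k ∈ Finset.range (n + m + 1),
      π k * dcReward n m lam μ1 μ2 R P1W P2W P2S C1 C21 C22 C3 C4 d k)
    (hη' : η' = ∑ k ∈ Finset.range (n + m + 1),
      π' k * dcReward n m lam μ1 μ2 R P1W P2W P2S C1 C21 C22 C3 C4 d' k)
    (g : ℕ → ℝ)
    (hg : dcPoisson n m lam μ1 μ2 d
      (dcReward n m lam μ1 μ2 R P1W P2W P2S C1 C21 C22 C3 C4 d) η g)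
    (c : ℝ) (hc : c = R - (P2W - P2S) * C1 / μ2) :
    η' - η = μ2 * π' (n + j0) * ((d' j0 : ℝ) - (d j0 : ℝ))
      * ((g (n + j0 - 1) - g (n + j0)) + c) :=
  stmt7_general n m lam μ1 μ2 R P1W P2W P2S C1 C21 C22 C3 C4 hμ2 j0 hj1 hj2 d d' hagree hdle hd'le
    π' hπ' η η' hη' g hg c hc
end

section
/- In the data center model under the threshold policy d_θ (with threshold θ ∈ {1,...,m+1}, defined by d_{n,j} = 0 for j < θ and d_{n,j} = j for j ≥ θ), the stationary probabilities are: π(i,0) = ξ_{i,0}/b for i ≤ n with ξ_{i,0} = λ^i/(i!μ_1^i); π(n,j) = (λ^n/(n!μ_1^n))(λ/(nμ_1))^j / b for 1 ≤ j ≤ θ−1; and π(n,j) = (λ^n/(n!μ_1^n))(λ/(nμ_1))^{θ−1} λ^{j−θ+1}/Π_{i=θ}^j(nμ_1+iμ_2) / b for θ ≤ j ≤ m, where b is the sum of all these unnormalized terms. -/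
/-!
The chain is a birth-death process on the states `0, …, n + m`, so it is reversible: a vector
satisfying detailed balance `π k · λ = π (k+1) · D (k+1)` across every edge is stationary. The
stated weights satisfy detailed balance: along `(i,0)` the ratio of consecutive weights is
`λ / (i μ₁)`, along `(n,j)` it is `λ / (n μ₁)` below the threshold and `λ / (n μ₁ + j μ₂)` from
it on, and the two families agree at the junction `(n,0)`. Dividing by their sum `b` normalizes.
-/

open Finset

section BirthDeath

variable {n m : ℕ} {lam μ1 μ2 : ℝ} {d : ℕ → ℕ}

@[simp]
lemma dcDeath_zero : dcDeath n μ1 μ2 d 0 = 0 := by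
  simp [dcDeath]

lemma dcGen_eq (k l : ℕ) :
    dcGen n m lam μ1 μ2 d k l =
      (if l = k + 1 then lam else 0) + (if l + 1 = k then dcDeath n μ1 μ2 d k else 0) +
        (if l = k then -((if k < n + m then lam else 0) + dcDeath n μ1 μ2 d k) else 0) := by
  unfold dcGen
  split_ifs <;> first | omega | ring

lemma sum_mul_dcGen_eq_zero_of_detailedBalance {π : ℕ → ℝ}
    (hπ : ∀ k < n + m, π k * lam = π (k + 1) * dcDeath n μ1 μ2 d (k + 1)) :
    ∀ l ∈ range (n + m + 1), ∑ k ∈ range (n + m + 1), π k * dcGen n m lam μ1 μ2 d k l = 0 := by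
  intro l hl
  have hl' : l < n + m + 1 := mem_range.mp hl
  have from_below : ∑ k ∈ range (n + m + 1), (if l = k + 1 then π k * lam else 0) =
      π l * dcDeath n μ1 μ2 d l := by
    rcases l with _ | l
    · simp
    · simp only [add_left_inj, sum_ite_eq, mem_range, if_pos (by omega : l < n + m + 1)]
      exact hπ l (by omega)
  have from_above : ∑ k ∈ range (n + m + 1),
      (if l + 1 = k then π k * dcDeath n μ1 μ2 d k else 0) =
      π l * (if l < n + m then lam else 0) := by
    rw [sum_ite_eq]
    by_cases h : l < n + m
    · simp [h, (by omega : l + 1 < n + m + 1), hπ l h]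
    · simp [h]
  simp only [dcGen_eq, mul_add, mul_ite, mul_zero, sum_add_distrib, from_below, from_above,
    sum_ite_eq, hl, if_true]
  split_ifs <;> ring

end BirthDeath

lemma sum_range_ite_le_sub {M : Type*} [AddCommMonoid M] (n m : ℕ) (f g : ℕ → M) :
    ∑ k ∈ range (n + m + 1), (if k ≤ n then f k else g (k - n)) =
      ∑ i ∈ range (n + 1), f i + ∑ j ∈ Icc 1 m, g j := by
  rw [(by omega : n + m + 1 = n + 1 + m), sum_range_add, ← Ico_add_one_right_eq_Icc,
    sum_Ico_eq_sum_range]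
  congr 1
  · exact sum_congr rfl fun i hi => if_pos (Nat.lt_succ_iff.mp (mem_range.mp hi))
  · refine sum_congr (by simp) fun j _ => ?_
    rw [if_neg (by omega)]
    congr 1
    omega

def thresholdPolicy (θ : ℕ) : ℕ → ℕ := fun j => if j < θ then 0 else j

lemma dcDeath_of_le {n k : ℕ} {μ1 μ2 : ℝ} {d : ℕ → ℕ} (hk : k ≤ n) :
    dcDeath n μ1 μ2 d k = k * μ1 := by
  simp [dcDeath, hk]

lemma dcDeath_add_thresholdPolicy {n j θ : ℕ} {μ1 μ2 : ℝ} (hj : 0 < j) :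
    dcDeath n μ1 μ2 (thresholdPolicy θ) (n + j) = n * μ1 + thresholdPolicy θ j * μ2 := by
  rw [dcDeath, if_neg (by omega), Nat.add_sub_cancel_left, thresholdPolicy]
  split_ifs <;> simp

section Weights

variable (n θ : ℕ) (lam μ1 μ2 : ℝ)

noncomputable def erlangWeight (i : ℕ) : ℝ := lam ^ i / ((i.factorial : ℝ) * μ1 ^ i)

noncomputable def thresholdWeight (j : ℕ) : ℝ :=
  if j < θ then erlangWeight lam μ1 n * (lam / ((n : ℝ) * μ1)) ^ j
  else erlangWeight lam μ1 n * (lam / ((n : ℝ) * μ1)) ^ (θ - 1) *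
    (lam ^ (j - θ + 1) / ∏ i ∈ Icc θ j, ((n : ℝ) * μ1 + (i : ℝ) * μ2))

noncomputable def stateWeight (k : ℕ) : ℝ :=
  if k ≤ n then erlangWeight lam μ1 k else thresholdWeight n θ lam μ1 μ2 (k - n)

variable {n θ lam μ1 μ2}

lemma erlangWeight_nonneg (hlam : 0 ≤ lam) (hμ1 : 0 ≤ μ1) (i : ℕ) :
    0 ≤ erlangWeight lam μ1 i := by
  unfold erlangWeight
  positivity

lemma thresholdWeight_nonneg (hlam : 0 ≤ lam) (hμ1 : 0 ≤ μ1) (hμ2 : 0 ≤ μ2) (j : ℕ) :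
    0 ≤ thresholdWeight n θ lam μ1 μ2 j := by
  have := erlangWeight_nonneg hlam hμ1 n
  unfold thresholdWeight
  split_ifs <;> positivity

lemma erlangWeight_succ_mul (hμ1 : μ1 ≠ 0) (i : ℕ) :
    erlangWeight lam μ1 (i + 1) * ((i + 1 : ℕ) * μ1) = erlangWeight lam μ1 i * lam := by
  unfold erlangWeight
  rw [Nat.factorial_succ]
  push_cast
  field_simp
  ring

lemma thresholdWeight_zero (hθ : 0 < θ) :
    thresholdWeight n θ lam μ1 μ2 0 = erlangWeight lam μ1 n := by
  simp [thresholdWeight, hθ]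

lemma thresholdWeight_succ_mul (hn : 0 < n) (hμ1 : 0 < μ1) (hμ2 : 0 ≤ μ2) (j : ℕ) :
    thresholdWeight n θ lam μ1 μ2 (j + 1) * (n * μ1 + thresholdPolicy θ (j + 1) * μ2) =
      thresholdWeight n θ lam μ1 μ2 j * lam := by
  have hn' : (n : ℝ) ≠ 0 := Nat.cast_ne_zero.mpr hn.ne'
  have hrate : ∀ i : ℕ, 0 < (n : ℝ) * μ1 + i * μ2 := fun i =>
    add_pos_of_pos_of_nonneg (mul_pos (Nat.cast_pos.mpr hn) hμ1) (by positivity)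
  unfold thresholdWeight thresholdPolicy
  rcases lt_trichotomy (j + 1) θ with hlt | rfl | hgt
  · rw [if_pos hlt, if_pos hlt, if_pos (by omega), Nat.cast_zero, zero_mul, add_zero, pow_succ]
    field_simp
  · rw [if_neg (lt_irrefl _), if_neg (lt_irrefl _), if_pos (by omega), Icc_self, prod_singleton,
      Nat.add_sub_cancel, Nat.sub_self, zero_add, pow_one]
    field_simp [(hrate (j + 1)).ne']
  · rw [if_neg (by omega), if_neg (by omega), if_neg (by omega), prod_Icc_succ_top (by omega),
      (by omega : j + 1 - θ + 1 = j - θ + 1 + 1)]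
    have hP := prod_pos fun i (_ : i ∈ Icc θ j) => hrate i
    generalize ∏ i ∈ Icc θ j, ((n : ℝ) * μ1 + i * μ2) = P at hP ⊢
    field_simp [(hrate (j + 1)).ne']
    ring

lemma stateWeight_detailedBalance (hn : 0 < n) (hθ : 0 < θ) (hμ1 : 0 < μ1) (hμ2 : 0 ≤ μ2)
    (k : ℕ) :
    stateWeight n θ lam μ1 μ2 k * lam =
      stateWeight n θ lam μ1 μ2 (k + 1) * dcDeath n μ1 μ2 (thresholdPolicy θ) (k + 1) := by
  unfold stateWeight
  rcases lt_or_ge k n with hk | hk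
  · rw [if_pos hk.le, if_pos (show k + 1 ≤ n from hk), dcDeath_of_le (show k + 1 ≤ n from hk),
      erlangWeight_succ_mul hμ1.ne']
  · obtain ⟨j, rfl⟩ := Nat.exists_eq_add_of_le hk
    rw [add_assoc, if_neg (show ¬ n + (j + 1) ≤ n by omega), Nat.add_sub_cancel_left,
      Nat.add_sub_cancel_left, dcDeath_add_thresholdPolicy (j := j + 1) (by omega),
      thresholdWeight_succ_mul hn hμ1 hμ2]
    split_ifs with hj
    · rw [(by omega : j = 0), add_zero, thresholdWeight_zero hθ]
    · rfl

end Weights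

theorem stmt14_general (n m : ℕ) (hn : 1 ≤ n)
    (lam μ1 μ2 : ℝ) (hlam : 0 < lam) (hμ1 : 0 < μ1) (hμ2 : 0 < μ2)
    (θ : ℕ) (hθ1 : 1 ≤ θ)
    (xi0 : ℕ → ℝ) (hxi0 : ∀ i, xi0 i = lam ^ i / ((i.factorial : ℝ) * μ1 ^ i))
    (xin : ℕ → ℝ)
    (hxin : ∀ j, xin j =
      if j < θ then
        lam ^ n / ((n.factorial : ℝ) * μ1 ^ n) * (lam / ((n : ℝ) * μ1)) ^ j
      else
        lam ^ n / ((n.factorial : ℝ) * μ1 ^ n) * (lam / ((n : ℝ) * μ1)) ^ (θ - 1)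
          * (lam ^ (j - θ + 1) /
              ∏ i ∈ Finset.Icc θ j, ((n : ℝ) * μ1 + (i : ℝ) * μ2)))
    (b : ℝ)
    (hb : b = ∑ i ∈ Finset.range (n + 1), xi0 i + ∑ j ∈ Finset.Icc 1 m, xin j)
    (π : ℕ → ℝ)
    (hπ : ∀ k, π k = (if k ≤ n then xi0 k else xin (k - n)) / b) :
    (∀ l ∈ Finset.range (n + m + 1),
      ∑ k ∈ Finset.range (n + m + 1),
        π k * dcGen n m lam μ1 μ2 (fun j => if j < θ then 0 else j) k l = 0) ∧
    ∑ k ∈ Finset.range (n + m + 1), π k = 1 := by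
  obtain rfl : xi0 = erlangWeight lam μ1 := funext hxi0
  obtain rfl : xin = thresholdWeight n θ lam μ1 μ2 := funext hxin
  have hπ' : ∀ k, π k = stateWeight n θ lam μ1 μ2 k / b := hπ
  have hb_pos : 0 < b := by
    rw [hb]
    refine add_pos_of_pos_of_nonneg ?_ (sum_nonneg fun j _ =>
      thresholdWeight_nonneg hlam.le hμ1.le hμ2.le j)
    rw [sum_range_succ']
    exact add_pos_of_nonneg_of_pos (sum_nonneg fun i _ => erlangWeight_nonneg hlam.le hμ1.le _)
      (by simp [erlangWeight])
  constructor
  · refine sum_mul_dcGen_eq_zero_of_detailedBalance fun k _ => ?_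
    rw [hπ', hπ', div_mul_eq_mul_div, div_mul_eq_mul_div,
      stateWeight_detailedBalance hn hθ1 hμ1 hμ2.le k]
    rfl
  · simp only [hπ, ← sum_div]
    rw [sum_range_ite_le_sub, ← hb, div_self hb_pos.ne']

/-- under the threshold policy `d_θ` (with `d_{n,j} = 0` for
`j < θ` and `d_{n,j} = j` for `j ≥ θ`), the explicitly given vector is the
stationary distribution of the chain. -/
theorem stmt14 (n m : ℕ) (hn : 1 ≤ n) (hm : 1 ≤ m)
    (lam μ1 μ2 : ℝ) (hlam : 0 < lam) (hμ1 : 0 < μ1) (hμ2 : 0 < μ2)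
    (θ : ℕ) (hθ1 : 1 ≤ θ) (hθ2 : θ ≤ m + 1)
    (xi0 : ℕ → ℝ) (hxi0 : ∀ i, xi0 i = lam ^ i / ((i.factorial : ℝ) * μ1 ^ i))
    (xin : ℕ → ℝ)
    (hxin : ∀ j, xin j =
      if j < θ then
        lam ^ n / ((n.factorial : ℝ) * μ1 ^ n) * (lam / ((n : ℝ) * μ1)) ^ j
      else
        lam ^ n / ((n.factorial : ℝ) * μ1 ^ n) * (lam / ((n : ℝ) * μ1)) ^ (θ - 1)
          * (lam ^ (j - θ + 1) /
              ∏ i ∈ Finset.Icc θ j, ((n : ℝ) * μ1 + (i : ℝ) * μ2)))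
    (b : ℝ)
    (hb : b = ∑ i ∈ Finset.range (n + 1), xi0 i + ∑ j ∈ Finset.Icc 1 m, xin j)
    (π : ℕ → ℝ)
    (hπ : ∀ k, π k = (if k ≤ n then xi0 k else xin (k - n)) / b) :
    (∀ l ∈ Finset.range (n + m + 1),
      ∑ k ∈ Finset.range (n + m + 1),
        π k * dcGen n m lam μ1 μ2 (fun j => if j < θ then 0 else j) k l = 0) ∧
    ∑ k ∈ Finset.range (n + m + 1), π k = 1 :=
  stmt14_general n m hn lam μ1 μ2 hlam hμ1 hμ2 θ hθ1 xi0 hxi0 xin hxin b hb π hπ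
end
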